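/- arXiv:2009.02714 — 5 statements merged into one kernel-verified Lean document; each statement's English description precedes it below -/
import Mathlib

section
/- Let x be a solution of the delayed consensus inequality on [t₀,∞). Then the function Λ(t) = max_{i∈[1:n]} sup_{s∈[t−h̄,t]} x_i(s) is non-increasing on [t₀,∞). -/
/-!
Fix a level `M` bounding every coordinate on a window `[T - h̄, T]`. While `x i` stays above `M`,
its delayed neighbours exceed `M` by at most the current overshoot `c`, so `x i` grows at rate at
most `n ā c`; over a step `δ` with `n ā δ ≤ 1/2` the overshoot therefore halves, hence vanishes, and
repeating with step `δ` keeps `x ≤ M` forever. With `M = Λ(t₁)` this gives `Λ(t₂) ≤ Λ(t₁)`.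
-/

open MeasureTheory Set Filter intervalIntegral

noncomputable section

/-- Standing assumptions on the weight functions: measurable,
`0 ≤ a i j t ≤ ā` on `[0,∞)` and `a i i ≡ 0`. -/
def GoodWeights (n : ℕ) (abar : ℝ) (a : Fin n → Fin n → ℝ → ℝ) : Prop :=
  (∀ i j, Measurable (a i j)) ∧
  (∀ i j, ∀ t : ℝ, 0 ≤ t → 0 ≤ a i j t ∧ a i j t ≤ abar) ∧
  (∀ i, ∀ t : ℝ, 0 ≤ t → a i i t = 0)

/-- Standing assumptions on the delay functions: measurable,
`0 ≤ h i j t ≤ h̄` on `[0,∞)` and `h i i ≡ 0`. -/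
def GoodDelays (n : ℕ) (hbar : ℝ) (h : Fin n → Fin n → ℝ → ℝ) : Prop :=
  (∀ i j, Measurable (h i j)) ∧
  (∀ i j, ∀ t : ℝ, 0 ≤ t → 0 ≤ h i j t ∧ h i j t ≤ hbar) ∧
  (∀ i, ∀ t : ℝ, 0 ≤ t → h i i t = 0)

/-- `x` is bounded on every compact subset of `[t₀ - h̄, ∞)`. -/
def LocBounded (n : ℕ) (t0 hbar : ℝ) (x : ℝ → Fin n → ℝ) : Prop :=
  ∀ T : ℝ, ∃ C : ℝ, ∀ i : Fin n, ∀ s ∈ Icc (t0 - hbar) T, |x s i| ≤ C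

/-- `x` is a solution of the delayed consensus differential *inequality* on `[t₀,∞)`:
it is locally bounded on `[t₀ - h̄, ∞)`, absolutely continuous on `[t₀,∞)` with a.e.
derivative `D` (encoded via the integral representation with locally integrable `D`),
and `D` satisfies the consensus inequality almost everywhere on `[t₀,∞)`. -/
def IsSolIneq (n : ℕ) (a h : Fin n → Fin n → ℝ → ℝ) (hbar t0 : ℝ)
    (x D : ℝ → Fin n → ℝ) : Prop :=
  LocBounded n t0 hbar x ∧
  (∀ i : Fin n, ∀ T : ℝ, IntegrableOn (fun s => D s i) (Icc t0 T)) ∧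
  (∀ i : Fin n, ∀ t : ℝ, t0 ≤ t → x t i = x t0 i + ∫ s in t0..t, D s i) ∧
  (∀ᵐ t : ℝ ∂volume, t0 ≤ t → ∀ i : Fin n,
    D t i ≤ ∑ j : Fin n, a i j t * (x (t - h i j t) j - x t i))

/-- `x` is a solution of the delayed consensus *equation* on `[t₀,∞)`. -/
def IsSolEq (n : ℕ) (a h : Fin n → Fin n → ℝ → ℝ) (hbar t0 : ℝ)
    (x D : ℝ → Fin n → ℝ) : Prop :=
  LocBounded n t0 hbar x ∧
  (∀ i : Fin n, ∀ T : ℝ, IntegrableOn (fun s => D s i) (Icc t0 T)) ∧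
  (∀ i : Fin n, ∀ t : ℝ, t0 ≤ t → x t i = x t0 i + ∫ s in t0..t, D s i) ∧
  (∀ᵐ t : ℝ ∂volume, t0 ≤ t → ∀ i : Fin n,
    D t i = ∑ j : Fin n, a i j t * (x (t - h i j t) j - x t i))

/-- `Λ(t) = max_i sup_{s ∈ [t-h̄, t]} x_i(s)`. -/
def Lam (n : ℕ) (hbar : ℝ) (x : ℝ → Fin n → ℝ) (t : ℝ) : ℝ :=
  ⨆ i : Fin n, sSup ((fun s => x s i) '' Icc (t - hbar) t)

/-- `λ(t) = min_i inf_{s ∈ [t-h̄, t]} x_i(s)`. -/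
def lam (n : ℕ) (hbar : ℝ) (x : ℝ → Fin n → ℝ) (t : ℝ) : ℝ :=
  ⨅ i : Fin n, sInf ((fun s => x s i) '' Icc (t - hbar) t)

/-- Non-instantaneous type-symmetry of the weight matrix with sequence `tp` and
constant `K` (Definition 1). -/
def NonInstTypeSymm (n : ℕ) (a : Fin n → Fin n → ℝ → ℝ) (tp : ℕ → ℝ) (K : ℝ) : Prop :=
  tp 0 = 0 ∧ StrictMono tp ∧ Tendsto tp atTop atTop ∧ 1 ≤ K ∧
  ∀ p : ℕ, ∀ i j : Fin n,
    K⁻¹ * ∫ t in tp p..tp (p + 1), a j i t ≤ (∫ t in tp p..tp (p + 1), a i j t) ∧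
    (∫ t in tp p..tp (p + 1), a i j t) ≤ K * ∫ t in tp p..tp (p + 1), a j i t

/-- The persistent graph `G_∞`, whose arcs are the pairs `(j,i)` with
`∫_0^∞ a_{ij} = ∞` (i.e. `a i j` is not integrable on `[0,∞)`), is connected:
the symmetric reflexive-transitive closure of the arc relation relates any two nodes. -/
def PersGraphConnected (n : ℕ) (a : Fin n → Fin n → ℝ → ℝ) : Prop :=
  ∀ u v : Fin n, Relation.ReflTransGen
    (fun p q => ¬ IntegrableOn (a q p) (Ici 0) ∨ ¬ IntegrableOn (a p q) (Ici 0)) u v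

/-- The weight matrix is repeatedly strongly connected with sequence `tp` and
constant `ε` (Definition 2): on each `[t_p, t_{p+1}]`, the graph whose arcs `(j,i)`
satisfy `∫_{t_p}^{t_{p+1}} a_{ij} ≥ ε` is strongly connected. -/
def RepeatedlyStronglyConnected (n : ℕ) (a : Fin n → Fin n → ℝ → ℝ)
    (tp : ℕ → ℝ) (ε : ℝ) : Prop :=
  tp 0 = 0 ∧ StrictMono tp ∧ Tendsto tp atTop atTop ∧ 0 < ε ∧
  ∀ p : ℕ, ∀ u v : Fin n, Relation.ReflTransGen
    (fun i j => ε ≤ ∫ t in tp p..tp (p + 1), a j i t) u v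

/-- The quantity `M = sup_{i,j,p} ∫_{t_p}^{t_{p+1}} a_{ij}` is finite, bounded by `M`. -/
def MBound (n : ℕ) (a : Fin n → Fin n → ℝ → ℝ) (tp : ℕ → ℝ) (M : ℝ) : Prop :=
  ∀ p : ℕ, ∀ i j : Fin n, (∫ t in tp p..tp (p + 1), a i j t) ≤ M

end

theorem ContinuousOn.exists_last_le {f : ℝ → ℝ} {a b M : ℝ} (hab : a ≤ b)
    (hf : ContinuousOn f (Icc a b)) (ha : f a ≤ M) :
    ∃ σ ∈ Icc a b, f σ ≤ M ∧ ∀ s ∈ Ioc σ b, M < f s := by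
  set S := Icc a b ∩ f ⁻¹' Iic M
  have hS : IsClosed S := hf.preimage_isClosed_of_isClosed isClosed_Icc isClosed_Iic
  have haS : a ∈ S := ⟨⟨le_rfl, hab⟩, ha⟩
  have hbdd : BddAbove S := ⟨b, fun s hs => hs.1.2⟩
  obtain ⟨hσ, hfσ⟩ := hS.csSup_mem ⟨a, haS⟩ hbdd
  refine ⟨sSup S, hσ, hfσ, fun s hs => ?_⟩
  by_contra! hfs
  exact (le_csSup hbdd ⟨⟨hσ.1.trans hs.1.le, hs.2⟩, hfs⟩).not_gt hs.1

theorem sum_mul_sub_le_card_mul {n : ℕ} {abar c z : ℝ} {w y : Fin n → ℝ}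
    (hw : ∀ j, 0 ≤ w j ∧ w j ≤ abar) (hy : ∀ j, y j - z ≤ c) (hc : 0 ≤ c) :
    ∑ j, w j * (y j - z) ≤ n * abar * c := by
  calc ∑ j, w j * (y j - z) ≤ ∑ _j : Fin n, abar * c :=
        Finset.sum_le_sum fun j _ =>
          (mul_le_mul_of_nonneg_left (hy j) (hw j).1).trans
            (mul_le_mul_of_nonneg_right (hw j).2 hc)
    _ = n * abar * c := by simp [mul_assoc]

namespace IsSolIneq

variable {n : ℕ} {abar hbar t0 : ℝ} {a h : Fin n → Fin n → ℝ → ℝ} {x D : ℝ → Fin n → ℝ}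

theorem continuousOn (hx : IsSolIneq n a h hbar t0 x D) (i : Fin n) (T : ℝ) :
    ContinuousOn (fun s => x s i) (Icc t0 T) := by
  rcases le_or_gt t0 T with hT | hT
  · have hprim := intervalIntegral.continuousOn_primitive_interval (μ := volume)
      (f := fun s => D s i) (a := t0) (b := T) (by rw [uIcc_of_le hT]; exact hx.2.1 i T)
    rw [uIcc_of_le hT] at hprim
    exact (continuousOn_const.add hprim).congr fun s hs => hx.2.2.1 i s hs.1
  · simp [Icc_eq_empty_of_lt hT]

theorem sub_le_mul_of_ae_le (hx : IsSolIneq n a h hbar t0 x D) {i : Fin n} {σ τ c : ℝ}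
    (hσ : t0 ≤ σ) (hστ : σ ≤ τ) (hD : ∀ᵐ s ∂volume.restrict (Ioc σ τ), D s i ≤ c) :
    x τ i - x σ i ≤ c * (τ - σ) := by
  have hτ : t0 ≤ τ := hσ.trans hστ
  have hint : IntervalIntegrable (fun s => D s i) volume t0 τ :=
    (intervalIntegrable_iff_integrableOn_Icc_of_le hτ).2 (hx.2.1 i τ)
  have hint' : IntervalIntegrable (fun s => D s i) volume t0 σ :=
    hint.mono_set (by simpa [uIcc_of_le hσ, uIcc_of_le hτ] using Icc_subset_Icc_right hστ)
  have hIoc : IntegrableOn (fun s => D s i) (Ioc σ τ) :=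
    (hx.2.1 i τ).mono_set (Ioc_subset_Icc_self.trans (Icc_subset_Icc hσ le_rfl))
  calc x τ i - x σ i = ∫ s in Ioc σ τ, D s i := by
        rw [hx.2.2.1 i τ hτ, hx.2.2.1 i σ hσ, add_sub_add_left_eq_sub,
          intervalIntegral.integral_interval_sub_left hint hint',
          intervalIntegral.integral_of_le hστ]
    _ ≤ ∫ _ in Ioc σ τ, c := setIntegral_mono_ae_restrict hIoc (by simp) hD
    _ = c * (τ - σ) := by simp [hστ, mul_comm]

variable (hx : IsSolIneq n a h hbar t0 x D) (ha : GoodWeights n abar a)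
  (hh : GoodDelays n hbar h) (habar : 0 ≤ abar) (ht0 : 0 ≤ t0)
include hx ha hh habar ht0

theorem le_add_half_of_le_add {T M c δ : ℝ} (hhbar : 0 ≤ hbar) (hT : t0 ≤ T) (hc : 0 ≤ c)
    (hδ : n * abar * δ ≤ 1 / 2) (hpast : ∀ j, ∀ s ∈ Icc (T - hbar) T, x s j ≤ M)
    (hnow : ∀ j, ∀ s ∈ Icc T (T + δ), x s j ≤ M + c) :
    ∀ i, ∀ t ∈ Icc T (T + δ), x t i ≤ M + c / 2 := by
  intro i t ht
  rcases le_or_gt (x t i) M with hle | hgt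
  · linarith
  obtain ⟨σ, hσ, hxσ, habove⟩ := (hx.continuousOn i t).mono (Icc_subset_Icc hT le_rfl)
    |>.exists_last_le ht.1 (hpast i T ⟨by linarith, le_rfl⟩)
  have hdelayed : ∀ s ∈ Icc T t, ∀ j, x (s - h i j s) j ≤ M + c := by
    intro s hs j
    obtain ⟨hh0, hhbar'⟩ := hh.2.1 i j s (by linarith [hs.1])
    rcases le_or_gt (s - h i j s) T with hpre | hpost
    · linarith [hpast j _ ⟨by linarith [hs.1], hpre⟩]
    · exact hnow j _ ⟨hpost.le, by linarith [hs.2, ht.2]⟩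
  have hdrift : ∀ᵐ s ∂volume.restrict (Ioc σ t), D s i ≤ n * abar * c := by
    filter_upwards [ae_restrict_mem measurableSet_Ioc, ae_restrict_of_ae hx.2.2.2]
      with s hs hD
    have hsT : T ≤ s := hσ.1.trans hs.1.le
    refine (hD (hT.trans hsT) i).trans (sum_mul_sub_le_card_mul
      (fun j => ha.2.1 i j s (by linarith)) (fun j => ?_) hc)
    linarith [hdelayed s ⟨hsT, hs.2⟩ j, habove s hs]
  have hincr := hx.sub_le_mul_of_ae_le (hT.trans hσ.1) hσ.2 hdrift
  have hgain : n * abar * c * (t - σ) ≤ c / 2 := by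
    calc n * abar * c * (t - σ) ≤ n * abar * δ * c := by
          have := mul_nonneg (mul_nonneg (Nat.cast_nonneg n) habar) hc
          nlinarith [ht.2, hσ.1]
      _ ≤ c / 2 := by nlinarith
  linarith


theorem le_of_past_le_of_le {T M δ : ℝ} (hhbar : 0 ≤ hbar) (hT : t0 ≤ T)
    (hδ : n * abar * δ ≤ 1 / 2) (hpast : ∀ j, ∀ s ∈ Icc (T - hbar) T, x s j ≤ M) :
    ∀ i, ∀ t ∈ Icc T (T + δ), x t i ≤ M := by
  obtain ⟨C, hC⟩ := hx.1 (T + δ)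
  have hhalving : ∀ k : ℕ, ∀ i, ∀ t ∈ Icc T (T + δ), x t i ≤ M + |C - M| / 2 ^ k := by
    intro k
    induction k with
    | zero =>
      intro i t ht
      have := hC i t ⟨by linarith [ht.1], ht.2⟩
      linarith [le_abs_self (x t i), le_abs_self (C - M), pow_zero (2 : ℝ), div_one |C - M|]
    | succ k ih =>
      simpa [pow_succ, div_div] using hx.le_add_half_of_le_add ha hh habar ht0 hhbar hT
        (by positivity) hδ hpast ih
  intro i t ht
  have hlim : Tendsto (fun k : ℕ => M + |C - M| / 2 ^ k) atTop (nhds M) := by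
    simpa using tendsto_const_nhds.add (tendsto_const_nhds.div_atTop
      (tendsto_pow_atTop_atTop_of_one_lt (one_lt_two : (1 : ℝ) < 2)))
  exact ge_of_tendsto' hlim fun k => hhalving k i t ht


theorem le_of_past_le {t1 M : ℝ} (hhbar : 0 ≤ hbar) (ht1 : t0 ≤ t1)
    (hpast : ∀ j, ∀ s ∈ Icc (t1 - hbar) t1, x s j ≤ M) :
    ∀ i, ∀ t, t1 ≤ t → x t i ≤ M := by
  set δ : ℝ := 1 / (2 * (n * abar + 1))
  have hna : 0 ≤ n * abar := mul_nonneg (Nat.cast_nonneg n) habar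
  have hδpos : 0 < δ := by positivity
  have hδ : n * abar * δ ≤ 1 / 2 := by
    rw [mul_one_div, div_le_div_iff₀ (by positivity) two_pos]
    linarith
  have hsteps : ∀ k : ℕ, ∀ j, ∀ s ∈ Icc (t1 - hbar) (t1 + k * δ), x s j ≤ M := by
    intro k
    induction k with
    | zero => simpa using hpast
    | succ k ih =>
      intro j s hs
      have hk : 0 ≤ (k : ℝ) * δ := by positivity
      rcases le_or_gt s (t1 + k * δ) with hprev | hnew
      · exact ih j s ⟨hs.1, hprev⟩
      · refine hx.le_of_past_le_of_le ha hh habar ht0 hhbar (by linarith) hδ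
          (fun j s hs => ih j s ⟨by linarith [hs.1], hs.2⟩) j s ⟨hnew.le, ?_⟩
        push_cast at hs
        linarith [hs.2]
  intro i t ht
  obtain ⟨k, hk⟩ := exists_nat_ge ((t - t1) / δ)
  rw [div_le_iff₀ hδpos] at hk
  exact hsteps k i t ⟨by linarith, by linarith⟩

end IsSolIneq

theorem le_Lam {n : ℕ} {hbar t0 t s : ℝ} {x : ℝ → Fin n → ℝ} (hx : LocBounded n t0 hbar x)
    (ht : t0 ≤ t) (i : Fin n) (hs : s ∈ Icc (t - hbar) t) : x s i ≤ Lam n hbar x t := by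
  obtain ⟨C, hC⟩ := hx t
  have hbdd : BddAbove ((fun s => x s i) '' Icc (t - hbar) t) := by
    refine ⟨C, ?_⟩
    rintro _ ⟨u, hu, rfl⟩
    exact (le_abs_self _).trans (hC i u ⟨by linarith [hu.1], hu.2⟩)
  exact (le_csSup hbdd ⟨s, hs, rfl⟩).trans
    (le_ciSup (f := fun i => sSup ((fun s => x s i) '' Icc (t - hbar) t))
      (Set.finite_range _).bddAbove i)

theorem Lam_le {n : ℕ} [Nonempty (Fin n)] {hbar t M : ℝ} {x : ℝ → Fin n → ℝ} (hhbar : 0 ≤ hbar)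
    (hM : ∀ i, ∀ s ∈ Icc (t - hbar) t, x s i ≤ M) : Lam n hbar x t ≤ M :=
  ciSup_le fun i => csSup_le ((nonempty_Icc.2 (by linarith)).image _)
    (by rintro _ ⟨s, hs, rfl⟩; exact hM i s hs)

theorem stmt0 (n : ℕ) (hn : 1 ≤ n) (abar hbar : ℝ) (habar : 0 ≤ abar) (hhbar : 0 ≤ hbar)
    (a h : Fin n → Fin n → ℝ → ℝ)
    (ha : GoodWeights n abar a) (hh : GoodDelays n hbar h)
    (t0 : ℝ) (ht0 : 0 ≤ t0) (x D : ℝ → Fin n → ℝ)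
    (hx : IsSolIneq n a h hbar t0 x D) :
    AntitoneOn (Lam n hbar x) (Ici t0) := by
  have : Nonempty (Fin n) := ⟨⟨0, hn⟩⟩
  intro t1 ht1 t2 _ h12
  have hpast : ∀ j, ∀ s ∈ Icc (t1 - hbar) t1, x s j ≤ Lam n hbar x t1 :=
    fun j s hs => le_Lam hx.1 ht1 j hs
  refine Lam_le hhbar fun i s hs => ?_
  rcases le_or_gt s t1 with hle | hgt
  · exact hpast i s ⟨by linarith [hs.1], hle⟩
  · exact hx.le_of_past_le ha hh habar ht0 hhbar ht1 hpast i s hgt.le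
end

section
/- Let x be a solution of the delayed consensus equation on [t₀,∞). Then the function λ(t) = min_{i∈[1:n]} inf_{s∈[t−h̄,t]} x_i(s) is non-decreasing on [t₀,∞). -/
open MeasureTheory Set Filter intervalIntegral

/-!
A lower bound `c` valid for all coordinates on a window `[τ - h̄, τ]` propagates a fixed step
`δ = 1 / (n ā + 1)` ahead. Indeed, let `m > 0` be the largest deficit `c - x_i(t)` on `[τ, τ + δ]`
and let `s` be the last time before `t` at which `x_i ≥ c`. On `(s, t]` every delayed value is
at least `c - m` while `x_i < c`, so `ẋ_i ≥ -n ā m` there, whence `m ≤ n ā δ m < m`.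
Iterating the step from the window defining `λ(t₁)` gives `x ≥ λ(t₁)` on `[t₁ - h̄, ∞)`.
-/

lemma neg_card_mul_le_sum_mul_sub {ι : Type*} [Fintype ι] {w y : ι → ℝ} {z c m abar : ℝ}
    (hw : ∀ j, 0 ≤ w j ∧ w j ≤ abar) (hm : 0 ≤ m) (hz : z ≤ c) (hy : ∀ j, c - m ≤ y j) :
    -(Fintype.card ι * abar * m) ≤ ∑ j, w j * (y j - z) := by
  calc -(Fintype.card ι * abar * m) = ∑ _j : ι, -(abar * m) := by
        rw [Finset.sum_const, Finset.card_univ, nsmul_eq_mul]; ring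
    _ ≤ ∑ j, w j * (y j - z) := Finset.sum_le_sum fun j _ => by
        obtain ⟨hw0, hw1⟩ := hw j
        nlinarith [hy j]

section Primitive

variable {f g : ℝ → ℝ} {t0 : ℝ}

lemma intervalIntegrable_of_forall_integrableOn_Icc (hg : ∀ T, IntegrableOn g (Icc t0 T))
    {s t : ℝ} (hs : t0 ≤ s) (ht : t0 ≤ t) : IntervalIntegrable g volume s t :=
  ((hg (max s t)).mono_set
    (uIcc_subset_Icc ⟨hs, le_max_left _ _⟩ ⟨ht, le_max_right _ _⟩)).intervalIntegrable

lemma sub_eq_integral_of_eq_add_integral (hg : ∀ T, IntegrableOn g (Icc t0 T))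
    (hf : ∀ t, t0 ≤ t → f t = f t0 + ∫ u in t0..t, g u) {s t : ℝ} (hs : t0 ≤ s) (ht : t0 ≤ t) :
    f t - f s = ∫ u in s..t, g u := by
  rw [hf t ht, hf s hs, ← integral_interval_sub_left
    (intervalIntegrable_of_forall_integrableOn_Icc hg le_rfl ht)
    (intervalIntegrable_of_forall_integrableOn_Icc hg le_rfl hs)]
  ring

lemma continuousOn_Icc_of_eq_add_integral (hg : ∀ T, IntegrableOn g (Icc t0 T))
    (hf : ∀ t, t0 ≤ t → f t = f t0 + ∫ u in t0..t, g u) (T : ℝ) : ContinuousOn f (Icc t0 T) := by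
  have hT : t0 ≤ max t0 T := le_max_left _ _
  have hprim := (continuousOn_const (c := f t0)).add <| continuousOn_primitive_interval'
    (intervalIntegrable_of_forall_integrableOn_Icc hg le_rfl hT) left_mem_uIcc
  rw [uIcc_of_le hT] at hprim
  exact (hprim.congr fun t ht => hf t ht.1).mono (Icc_subset_Icc_right (le_max_right _ _))

lemma sub_mul_le_of_eq_add_integral (hg : ∀ T, IntegrableOn g (Icc t0 T))
    (hf : ∀ t, t0 ≤ t → f t = f t0 + ∫ u in t0..t, g u) {s t L : ℝ} (hs : t0 ≤ s) (hst : s ≤ t)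
    (hL : ∀ᵐ u, u ∈ Ioc s t → -L ≤ g u) : f s - L * (t - s) ≤ f t := by
  have hint : ∫ u in s..t, -L ≤ ∫ u in s..t, g u := by
    simp only [integral_of_le hst]
    exact setIntegral_mono_ae_restrict (integrableOn_const (by simp))
      ((hg t).mono_set (Ioc_subset_Icc_self.trans (Icc_subset_Icc_left hs))) ((ae_restrict_iff' measurableSet_Ioc).2 hL)
  rw [intervalIntegral.integral_const, smul_eq_mul,
    ← sub_eq_integral_of_eq_add_integral hg hf hs (hs.trans hst)] at hint
  linarith

end Primitive

def IsSuperSol (n : ℕ) (a h : Fin n → Fin n → ℝ → ℝ) (t0 : ℝ) (x D : ℝ → Fin n → ℝ) : Prop :=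
  (∀ i : Fin n, ∀ T : ℝ, IntegrableOn (fun s => D s i) (Icc t0 T)) ∧
  (∀ i : Fin n, ∀ t : ℝ, t0 ≤ t → x t i = x t0 i + ∫ s in t0..t, D s i) ∧
  (∀ᵐ t : ℝ ∂volume, t0 ≤ t → ∀ i : Fin n,
    ∑ j : Fin n, a i j t * (x (t - h i j t) j - x t i) ≤ D t i)

namespace IsSuperSol

variable {n : ℕ} {abar hbar t0 c : ℝ} {a h : Fin n → Fin n → ℝ → ℝ} {x D : ℝ → Fin n → ℝ}

lemma continuousOn (hx : IsSuperSol n a h t0 x D) (i : Fin n) (T : ℝ) :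
    ContinuousOn (fun t => x t i) (Icc t0 T) :=
  continuousOn_Icc_of_eq_add_integral (hx.1 i) (hx.2.1 i) T

lemma sub_le_mul_of_sub_le (hx : IsSuperSol n a h t0 x D) (habar : 0 ≤ abar)
    (ha : ∀ i j t, t0 ≤ t → 0 ≤ a i j t ∧ a i j t ≤ abar)
    (hh : ∀ i j t, t0 ≤ t → 0 ≤ h i j t ∧ h i j t ≤ hbar)
    (hhbar : 0 ≤ hbar) {τ δ m : ℝ} (hτ : t0 ≤ τ) (hδ : 0 ≤ δ) (hc : ∀ j, ∀ s ∈ Icc (τ - hbar) τ, c ≤ x s j)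
    (hm : 0 ≤ m) (hcm : ∀ j, ∀ s ∈ Icc τ (τ + δ), c - x s j ≤ m) :
    ∀ i, ∀ t ∈ Icc τ (τ + δ), c - x t i ≤ n * abar * δ * m := by
  intro i t ht
  by_cases hct : c ≤ x t i
  · have : 0 ≤ n * abar * δ * m := by positivity
    linarith
  set S := {u ∈ Icc τ t | c ≤ x u i}
  have hS : IsClosed S := ContinuousOn.preimage_isClosed_of_isClosed
    ((hx.continuousOn i t).mono (Icc_subset_Icc_left hτ)) isClosed_Icc isClosed_Ici
  have hSbdd : BddAbove S := ⟨t, fun u hu => hu.1.2⟩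
  have hsS : sSup S ∈ S :=
    hS.csSup_mem ⟨τ, ⟨le_rfl, ht.1⟩, hc i τ ⟨by linarith, le_rfl⟩⟩ hSbdd
  set s := sSup S
  have hbelow : ∀ u ∈ Ioc s t, x u i < c := fun u hu => not_le.1 fun hcu =>
    hu.1.not_ge (le_csSup hSbdd ⟨⟨hsS.1.1.trans hu.1.le, hu.2⟩, hcu⟩)
  have hderiv : ∀ᵐ u, u ∈ Ioc s t → -(n * abar * m) ≤ D u i := by
    filter_upwards [hx.2.2] with u hu hus
    have hτu : τ ≤ u := hsS.1.1.trans hus.1.le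
    have hu0 : t0 ≤ u := hτ.trans hτu
    have hdelayed : ∀ j, c - m ≤ x (u - h i j u) j := fun j => by
      obtain ⟨h0, h1⟩ := hh i j u hu0
      rcases le_total (u - h i j u) τ with hle | hle
      · linarith [hc j _ ⟨by linarith, hle⟩]
      · linarith [hcm j _ ⟨hle, by linarith [hus.2, ht.2]⟩]
    have := neg_card_mul_le_sum_mul_sub (ha i · u hu0) hm (hbelow u hus).le hdelayed
    rw [Fintype.card_fin] at this
    exact this.trans (hu hu0 i)
  have hxst := sub_mul_le_of_eq_add_integral (hx.1 i) (hx.2.1 i) (hτ.trans hsS.1.1) hsS.1.2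
    hderiv
  have hts : n * abar * m * (t - s) ≤ n * abar * m * δ :=
    mul_le_mul_of_nonneg_left (by linarith [hsS.1.1, ht.2]) (by positivity)
  linarith [hsS.2]

lemma le_on_Icc_add_of_le_on_Icc_sub (hx : IsSuperSol n a h t0 x D) (habar : 0 ≤ abar)
    (ha : ∀ i j t, t0 ≤ t → 0 ≤ a i j t ∧ a i j t ≤ abar)
    (hh : ∀ i j t, t0 ≤ t → 0 ≤ h i j t ∧ h i j t ≤ hbar)
    (hhbar : 0 ≤ hbar) {τ δ : ℝ} (hτ : t0 ≤ τ) (hδ : 0 ≤ δ) (hδ1 : n * abar * δ < 1)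
    (hc : ∀ j, ∀ s ∈ Icc (τ - hbar) τ, c ≤ x s j) :
    ∀ j, ∀ s ∈ Icc τ (τ + δ), c ≤ x s j := by
  by_contra! hneg
  obtain ⟨i0, t, ht, hlt⟩ := hneg
  choose tmax htmax hmax using fun j => isCompact_Icc.exists_isMaxOn ⟨τ, le_rfl, by linarith⟩
    (continuousOn_const (c := c) |>.sub ((hx.continuousOn j (τ + δ)).mono
      (Icc_subset_Icc_left hτ)))
  obtain ⟨i, -, hi⟩ := Finset.exists_max_image Finset.univ (fun j => c - x (tmax j) j)
    ⟨i0, Finset.mem_univ _⟩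
  have hcm : ∀ j, ∀ s ∈ Icc τ (τ + δ), c - x s j ≤ c - x (tmax i) i :=
    fun j s hs => (hmax j hs).trans (hi j (Finset.mem_univ _))
  have hm : 0 < c - x (tmax i) i := by linarith [hcm i0 t ht]
  have := hx.sub_le_mul_of_sub_le habar ha hh hhbar hτ hδ hc hm.le hcm i (tmax i) (htmax i)
  nlinarith

lemma le_of_le_on_Icc (hx : IsSuperSol n a h t0 x D) (habar : 0 ≤ abar)
    (ha : ∀ i j t, t0 ≤ t → 0 ≤ a i j t ∧ a i j t ≤ abar)
    (hh : ∀ i j t, t0 ≤ t → 0 ≤ h i j t ∧ h i j t ≤ hbar)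
    (hhbar : 0 ≤ hbar) {t1 : ℝ} (ht1 : t0 ≤ t1) (hc : ∀ j, ∀ s ∈ Icc (t1 - hbar) t1, c ≤ x s j) :
    ∀ j s, t1 - hbar ≤ s → c ≤ x s j := by
  set δ : ℝ := 1 / (n * abar + 1)
  have hδ : 0 < δ := by positivity
  have hδ1 : n * abar * δ < 1 := by
    rw [mul_one_div, div_lt_one (by positivity)]
    linarith
  have hstep : ∀ k : ℕ, ∀ j, ∀ s ∈ Icc (t1 - hbar) (t1 + k * δ), c ≤ x s j := by
    intro k
    induction k with
    | zero => simpa using hc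
    | succ k ih =>
      have hkδ : 0 ≤ k * δ := by positivity
      intro j s hs
      rcases le_total s (t1 + k * δ) with hle | hle
      · exact ih j s ⟨hs.1, hle⟩
      · refine hx.le_on_Icc_add_of_le_on_Icc_sub habar ha hh hhbar (by linarith) hδ.le hδ1
          (fun j' s' hs' => ih j' s' ⟨by linarith [hs'.1], hs'.2⟩) j s ⟨hle, ?_⟩
        push_cast at hs
        linarith [hs.2]
  intro j s hs
  obtain ⟨k, hk⟩ := exists_nat_ge ((s - t1) / δ)
  rw [div_le_iff₀ hδ] at hk
  exact hstep k j s ⟨hs, by linarith⟩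

end IsSuperSol

lemma IsSolEq.isSuperSol {n : ℕ} {a h : Fin n → Fin n → ℝ → ℝ} {hbar t0 : ℝ}
    {x D : ℝ → Fin n → ℝ} (hx : IsSolEq n a h hbar t0 x D) : IsSuperSol n a h t0 x D :=
  ⟨hx.2.1, hx.2.2.1, by filter_upwards [hx.2.2.2] with t ht ht0 i using (ht ht0 i).ge⟩

section lam

variable {n : ℕ} {hbar t : ℝ} {x : ℝ → Fin n → ℝ}

lemma lam_le_of_mem_Icc {t0 s : ℝ} (hx : LocBounded n t0 hbar x) (ht : t0 ≤ t) (j : Fin n)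
    (hs : s ∈ Icc (t - hbar) t) : lam n hbar x t ≤ x s j := by
  obtain ⟨C, hC⟩ := hx t
  have hbdd : BddBelow ((fun s => x s j) '' Icc (t - hbar) t) := ⟨-C, by
    rintro _ ⟨s', hs', rfl⟩
    linarith [(abs_le.1 (hC j s' ⟨by linarith [hs'.1], hs'.2⟩)).1]⟩
  exact (ciInf_le (Finite.bddBelow_range _) j).trans (csInf_le hbdd ⟨s, hs, rfl⟩)

lemma le_lam_of_forall_le [Nonempty (Fin n)] {c : ℝ} (hhbar : 0 ≤ hbar)
    (h : ∀ j, ∀ s ∈ Icc (t - hbar) t, c ≤ x s j) : c ≤ lam n hbar x t :=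
  le_ciInf fun j => le_csInf ((nonempty_Icc.2 (by linarith)).image _) (forall_mem_image.2 (h j))

end lam

theorem stmt1 (n : ℕ) (hn : 1 ≤ n) (abar hbar : ℝ) (habar : 0 ≤ abar) (hhbar : 0 ≤ hbar)
    (a h : Fin n → Fin n → ℝ → ℝ)
    (ha : GoodWeights n abar a) (hh : GoodDelays n hbar h)
    (t0 : ℝ) (ht0 : 0 ≤ t0) (x D : ℝ → Fin n → ℝ)
    (hx : IsSolEq n a h hbar t0 x D) :
    MonotoneOn (lam n hbar x) (Ici t0) := by
  have : Nonempty (Fin n) := ⟨⟨0, hn⟩⟩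
  intro t1 ht1 t2 _ h12
  have hinit : ∀ j, ∀ s ∈ Icc (t1 - hbar) t1, lam n hbar x t1 ≤ x s j :=
    fun j _ hs => lam_le_of_mem_Icc hx.1 ht1 j hs
  have hlater := hx.isSuperSol.le_of_le_on_Icc habar (fun i j t ht => ha.2.1 i j t (ht0.trans ht))
    (fun i j t ht => hh.2.1 i j t (ht0.trans ht)) hhbar ht1 hinit
  exact le_lam_of_forall_le hhbar fun j s hs => hlater j s (by linarith [hs.1])
end

section
/- Let ξ ≥ 0 and let x be a solution of the delayed consensus equation on [ξ,∞) with initial data x(ξ) = v and x(s) = 0 for all s ∈ [ξ−h̄,ξ). If 0 ≤ v_i ≤ 1 for every i ∈ [1:n], then 0 ≤ x_i(t) ≤ 1 for every i ∈ [1:n] and every t ≥ ξ. (In particular, the evolutionary matrix U(t,ξ) of the delayed consensus dynamics is substochastic: it is nonnegative and satisfies U(t,ξ)𝟙 ≤ 𝟙.) -/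
/-!
A maximum principle for the delayed consensus inequality
`Dᵢ ≤ ∑ⱼ aᵢⱼ (xⱼ(t - hᵢⱼ) - xᵢ)`: if `x ≤ M` on the initial window `[ξ - h̄, ξ]`, then
`x ≤ M` on `[ξ, ∞)`. Each `xᵢ` stays strictly below the barrier `β t = M + ε (1 + (t - ξ))`:
at the first time `τ` some `xᵢ` touches it, every delayed value is at most `β τ`, while just
before `τ` the coordinate `xᵢ` is within `η` of `β τ`; so there `ẋᵢ ≤ n ā η < ε = β'`, and
`xᵢ` cannot have caught up with the barrier. Letting `ε → 0` gives `x ≤ M`. This is applied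
to `x` with `M = 1` and, since `-x` solves the same linear equation, to `-x` with `M = 0`.
-/

open MeasureTheory Set Filter intervalIntegral

open Topology

lemma continuousOn_of_eq_add_integral {x D : ℝ → ℝ} {ξ T : ℝ}
    (hD : IntegrableOn D (Icc ξ T)) (hx : ∀ t, ξ ≤ t → x t = x ξ + ∫ s in ξ..t, D s) :
    ContinuousOn x (Icc ξ T) := by
  rcases le_or_gt ξ T with hξT | hTξ
  · have hprim := continuousOn_primitive_interval (μ := volume) (a := ξ) (b := T)
      (by rwa [uIcc_of_le hξT])
    rw [uIcc_of_le hξT] at hprim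
    exact (continuousOn_const.add hprim).congr fun t ht => hx t ht.1
  · simp [Icc_eq_empty_of_lt hTξ]

lemma le_add_mul_of_eq_add_integral {x D : ℝ → ℝ} {ξ s t c : ℝ} (hξs : ξ ≤ s) (hst : s ≤ t)
    (hD : IntegrableOn D (Icc ξ t)) (hx : ∀ u, ξ ≤ u → x u = x ξ + ∫ r in ξ..u, D r)
    (hc : ∀ᵐ r, r ∈ Ioo s t → D r ≤ c) :
    x t ≤ x s + c * (t - s) := by
  have hDs : IntervalIntegrable D volume ξ s :=
    (intervalIntegrable_iff_integrableOn_Icc_of_le hξs).2 (hD.mono_set (Icc_subset_Icc_right hst))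
  have hDt : IntervalIntegrable D volume ξ t :=
    (intervalIntegrable_iff_integrableOn_Icc_of_le (hξs.trans hst)).2 hD
  have hDst : IntervalIntegrable D volume s t :=
    (intervalIntegrable_iff_integrableOn_Icc_of_le hst).2 (hD.mono_set (Icc_subset_Icc_left hξs))
  have hcIcc : D ≤ᵐ[volume.restrict (Icc s t)] fun _ => c :=
    (ae_restrict_congr_set Ioo_ae_eq_Icc).1 ((ae_restrict_iff' measurableSet_Ioo).2 hc)
  have hle := integral_mono_ae_restrict hst hDst intervalIntegrable_const hcIcc
  rw [intervalIntegral.integral_const, smul_eq_mul, ← integral_interval_sub_left hDt hDs] at hle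
  rw [hx t (hξs.trans hst), hx s hξs]
  linarith

lemma exists_first_crossing {ι : Type*} [Finite ι] {f : ι → ℝ → ℝ} {β : ℝ → ℝ} {a b t : ℝ}
    (hf : ∀ i, ContinuousOn (f i) (Icc a b)) (hβ : ContinuousOn β (Icc a b))
    (ht : t ∈ Icc a b) (hcross : ∃ i, β t ≤ f i t) :
    ∃ τ ∈ Icc a b, (∃ i, β τ ≤ f i τ) ∧ ∀ s ∈ Ico a τ, ∀ j, f j s < β s := by
  set S := {s ∈ Icc a b | ∃ i, β s ≤ f i s}
  have hS : IsClosed S := by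
    have : S = ⋃ i, {s ∈ Icc a b | β s ≤ f i s} := by ext; simp [S]
    rw [this]
    exact isClosed_iUnion_of_finite fun i => isClosed_Icc.isClosed_le hβ (hf i)
  have hSbdd : BddBelow S := ⟨a, fun s hs => hs.1.1⟩
  obtain ⟨hτab, hτ⟩ := hS.csInf_mem ⟨t, ht, hcross⟩ hSbdd
  refine ⟨sInf S, hτab, hτ, fun s hs j => lt_of_not_ge fun hj => ?_⟩
  exact (csInf_le hSbdd ⟨⟨hs.1, hs.2.le.trans hτab.2⟩, j, hj⟩).not_gt hs.2

lemma sum_mul_sub_le_card_mul_s2 {ι : Type*} [Fintype ι] {a y : ι → ℝ} {z abar η : ℝ}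
    (ha : ∀ j, 0 ≤ a j ∧ a j ≤ abar) (hy : ∀ j, y j - z ≤ η) (hη : 0 ≤ η) :
    ∑ j, a j * (y j - z) ≤ Fintype.card ι * abar * η :=
  calc ∑ j, a j * (y j - z) ≤ ∑ _j : ι, abar * η := Finset.sum_le_sum fun j _ =>
        (mul_le_mul_of_nonneg_left (hy j) (ha j).1).trans (mul_le_mul_of_nonneg_right (ha j).2 hη)
    _ = Fintype.card ι * abar * η := by simp [mul_assoc]

section DelayedSubsolution

variable {ι : Type*} [Fintype ι] {a h : ι → ι → ℝ → ℝ} {abar hbar ξ M : ℝ}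
  {x D : ℝ → ι → ℝ}

theorem lt_barrier_of_delayed_subsolution
    (ha : ∀ i j t, ξ ≤ t → 0 ≤ a i j t ∧ a i j t ≤ abar)
    (hh : ∀ i j t, ξ ≤ t → 0 ≤ h i j t ∧ h i j t ≤ hbar)
    (hD : ∀ i T, IntegrableOn (fun s => D s i) (Icc ξ T))
    (hx : ∀ i t, ξ ≤ t → x t i = x ξ i + ∫ s in ξ..t, D s i)
    (hsub : ∀ᵐ t, ξ ≤ t → ∀ i, D t i ≤ ∑ j, a i j t * (x (t - h i j t) j - x t i))
    (hinit : ∀ i, x ξ i ≤ M) (hpast : ∀ s ∈ Ico (ξ - hbar) ξ, ∀ i, x s i ≤ M)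
    {ε : ℝ} (hε : 0 < ε) {t : ℝ} (ht : ξ ≤ t) (i : ι) :
    x t i < M + ε * (1 + (t - ξ)) := by
  set β : ℝ → ℝ := fun t => M + ε * (1 + (t - ξ))
  have hβ_mono : Monotone β := fun s u hsu => by simp only [β]; gcongr
  have hcont : ∀ i, ContinuousOn (fun s => x s i) (Icc ξ t) := fun i =>
    continuousOn_of_eq_add_integral (hD i t) (hx i)
  by_contra! hti
  obtain ⟨τ, hτ, ⟨i, hiτ⟩, hbelow⟩ :=
    exists_first_crossing (β := β) hcont (by fun_prop) ⟨ht, le_rfl⟩ ⟨i, hti⟩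
  have hξτ : ξ < τ := by
    refine hτ.1.lt_of_ne fun hξτ => ?_
    subst hξτ
    linarith [hinit i, hiτ]
  have hdelayed : ∀ s ∈ Ico ξ τ, ∀ j k, x (s - h j k s) k ≤ β τ := by
    intro s hs j k
    obtain ⟨hh0, hhbar⟩ := hh j k s hs.1
    by_cases hξs : ξ ≤ s - h j k s
    · exact (hbelow _ ⟨hξs, by linarith [hs.2]⟩ k).le.trans (hβ_mono (by linarith [hs.2]))
    · calc x (s - h j k s) k ≤ M := hpast _ ⟨by linarith [hs.1], by linarith⟩ k
        _ ≤ β τ := by simp only [β]; nlinarith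
  obtain ⟨η, hη, hηε⟩ := exists_pos_mul_lt hε (Fintype.card ι * abar)
  have hnear : ∀ᶠ s in 𝓝[<] τ, s ∈ Ioo ξ τ ∧ x τ i - η < x s i := by
    have hlim : Tendsto (fun s => x s i) (𝓝[<] τ) (𝓝 (x τ i)) := by
      rw [← nhdsWithin_Ioo_eq_nhdsLT hξτ]
      exact ((hcont i τ hτ).mono (Ioo_subset_Icc_self.trans (Icc_subset_Icc_right hτ.2))).tendsto
    exact Filter.Eventually.and (Ioo_mem_nhdsLT hξτ) (hlim.eventually_const_lt (by linarith))
  obtain ⟨l, hlτ, hl⟩ := mem_nhdsLT_iff_exists_Ioo_subset.1 hnear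
  set s := (l + τ) / 2
  have hls : l < s := by simp only [s]; linarith [show l < τ from hlτ]
  have hsτ : s < τ := by simp only [s]; linarith [show l < τ from hlτ]
  have hξs : ξ < s := (hl ⟨hls, hsτ⟩).1.1
  have hrate : ∀ᵐ r, r ∈ Ioo s τ → D r i ≤ Fintype.card ι * abar * η := by
    filter_upwards [hsub] with r hr hrI
    obtain ⟨⟨hξr, -⟩, hxr⟩ := hl ⟨hls.trans hrI.1, hrI.2⟩
    refine (hr hξr.le i).trans
      (sum_mul_sub_le_card_mul_s2 (fun j => ha i j r hξr.le) (fun j => ?_) hη.le)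
    linarith [hdelayed r ⟨hξr.le, hrI.2⟩ i j]
  have hincr := le_add_mul_of_eq_add_integral hξs.le hsτ.le (hD i τ) (hx i) hrate
  have hslow : Fintype.card ι * abar * η * (τ - s) ≤ ε * (τ - s) :=
    mul_le_mul_of_nonneg_right hηε.le (by linarith)
  have hxs := hbelow s ⟨hξs.le, hsτ⟩ i
  simp only [β] at hiτ hxs
  linarith

theorem le_of_delayed_subsolution
    (ha : ∀ i j t, ξ ≤ t → 0 ≤ a i j t ∧ a i j t ≤ abar)
    (hh : ∀ i j t, ξ ≤ t → 0 ≤ h i j t ∧ h i j t ≤ hbar)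
    (hD : ∀ i T, IntegrableOn (fun s => D s i) (Icc ξ T))
    (hx : ∀ i t, ξ ≤ t → x t i = x ξ i + ∫ s in ξ..t, D s i)
    (hsub : ∀ᵐ t, ξ ≤ t → ∀ i, D t i ≤ ∑ j, a i j t * (x (t - h i j t) j - x t i))
    (hinit : ∀ i, x ξ i ≤ M) (hpast : ∀ s ∈ Ico (ξ - hbar) ξ, ∀ i, x s i ≤ M)
    {t : ℝ} (ht : ξ ≤ t) (i : ι) :
    x t i ≤ M := by
  refine le_of_forall_pos_lt_add fun ε hε => ?_
  have hlen : 0 < 1 + (t - ξ) := by linarith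
  simpa [div_mul_cancel₀ _ hlen.ne'] using
    lt_barrier_of_delayed_subsolution ha hh hD hx hsub hinit hpast (div_pos hε hlen) ht i

end DelayedSubsolution

theorem IsSolEq.neg {n : ℕ} {a h : Fin n → Fin n → ℝ → ℝ} {hbar ξ : ℝ} {x D : ℝ → Fin n → ℝ}
    (hx : IsSolEq n a h hbar ξ x D) : IsSolEq n a h hbar ξ (-x) (-D) := by
  obtain ⟨hbdd, hD, hrep, hsol⟩ := hx
  refine ⟨fun T => ?_, fun i T => (hD i T).neg, fun i t ht => ?_, ?_⟩
  · obtain ⟨C, hC⟩ := hbdd T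
    exact ⟨C, fun i s hs => by simpa using hC i s hs⟩
  · simp only [Pi.neg_apply, hrep i t ht, intervalIntegral.integral_neg]; ring
  · filter_upwards [hsol] with t ht hξt i
    simp only [Pi.neg_apply, ht hξt i, ← Finset.sum_neg_distrib]
    exact Finset.sum_congr rfl fun j _ => by ring

theorem IsSolEq.le_of_le {n : ℕ} {a h : Fin n → Fin n → ℝ → ℝ} {abar hbar ξ M : ℝ}
    {x D : ℝ → Fin n → ℝ} (hx : IsSolEq n a h hbar ξ x D)
    (ha : ∀ i j t, ξ ≤ t → 0 ≤ a i j t ∧ a i j t ≤ abar)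
    (hh : ∀ i j t, ξ ≤ t → 0 ≤ h i j t ∧ h i j t ≤ hbar)
    (hinit : ∀ i, x ξ i ≤ M) (hpast : ∀ s ∈ Ico (ξ - hbar) ξ, ∀ i, x s i ≤ M)
    {t : ℝ} (ht : ξ ≤ t) (i : Fin n) : x t i ≤ M := by
  obtain ⟨-, hD, hrep, hsol⟩ := hx
  refine le_of_delayed_subsolution ha hh hD hrep ?_ hinit hpast ht i
  filter_upwards [hsol] with t ht hξt i using (ht hξt i).le

theorem stmt2_general (n : ℕ) (abar hbar : ℝ)
    (a h : Fin n → Fin n → ℝ → ℝ)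
    (ha : GoodWeights n abar a) (hh : GoodDelays n hbar h)
    (ξ : ℝ) (hξ : 0 ≤ ξ) (v : Fin n → ℝ) (hv : ∀ i, 0 ≤ v i ∧ v i ≤ 1)
    (x D : ℝ → Fin n → ℝ) (hx : IsSolEq n a h hbar ξ x D)
    (hinit : ∀ i, x ξ i = v i)
    (hpast : ∀ s ∈ Ico (ξ - hbar) ξ, ∀ i, x s i = 0) :
    ∀ i : Fin n, ∀ t : ℝ, ξ ≤ t → 0 ≤ x t i ∧ x t i ≤ 1 := by
  have ha' : ∀ i j t, ξ ≤ t → 0 ≤ a i j t ∧ a i j t ≤ abar := fun i j t ht =>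
    ha.2.1 i j t (hξ.trans ht)
  have hh' : ∀ i j t, ξ ≤ t → 0 ≤ h i j t ∧ h i j t ≤ hbar := fun i j t ht =>
    hh.2.1 i j t (hξ.trans ht)
  intro i t ht
  constructor
  · have hneg := hx.neg.le_of_le (M := 0) ha' hh' (fun i => by simp [hinit, (hv i).1])
      (fun s hs i => by simp [hpast s hs i]) ht i
    simpa using hneg
  · exact hx.le_of_le ha' hh' (fun i => hinit i ▸ (hv i).2)
      (fun s hs i => (hpast s hs i).trans_le zero_le_one) ht i

theorem stmt2 (n : ℕ) (hn : 1 ≤ n) (abar hbar : ℝ) (habar : 0 ≤ abar) (hhbar : 0 ≤ hbar)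
    (a h : Fin n → Fin n → ℝ → ℝ)
    (ha : GoodWeights n abar a) (hh : GoodDelays n hbar h)
    (ξ : ℝ) (hξ : 0 ≤ ξ) (v : Fin n → ℝ) (hv : ∀ i, 0 ≤ v i ∧ v i ≤ 1)
    (x D : ℝ → Fin n → ℝ) (hx : IsSolEq n a h hbar ξ x D)
    (hinit : ∀ i, x ξ i = v i)
    (hpast : ∀ s ∈ Ico (ξ - hbar) ξ, ∀ i, x s i = 0) :
    ∀ i : Fin n, ∀ t : ℝ, ξ ≤ t → 0 ≤ x t i ∧ x t i ≤ 1 :=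
  stmt2_general n abar hbar a h ha hh ξ hξ v hv x D hx hinit hpast
end

section
/- Let ξ ≥ 0 and let x be a solution of the delayed consensus equation on [ξ,∞) with initial data x_i(ξ) = 1 for all i ∈ [1:n] and x(s) = 0 for all s ∈ [ξ−h̄,ξ). Then x_i(t) ≥ ψ for every i ∈ [1:n] and every t ≥ ξ, where ψ := e^{−(n−1)·ā·h̄}. (In particular, the evolutionary matrix U(t,ξ) satisfies U(t,ξ)𝟙 ≥ ψ𝟙.) -/
/-!
Put `c = (n - 1) ā`, which bounds every row sum of the weights. As long as the delayed values
`x_j (t - h_ij t)` and `x_i t` stay above a level `ρ`, the equation gives `ẋ_i ≥ -c (x_i - ρ)`,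
so `x_i - ρ` decays at most like `e^{-ct}`. Fix `0 < r < ψ` and consider the first time `τ` at
which some `x_i` drops to `r`. Before `ξ + h̄` the delayed values are `≥ 0` because the past
data vanish, so `x_i t ≥ e^{-c (t - ξ)} ≥ ψ > r`; after `ξ + h̄` they are `≥ r`, and `x_i - r`
stays positive, starting from `x_i (ξ + h̄) - r ≥ ψ - r`. Either way `x_i τ > r`.
-/

open MeasureTheory Set Filter intervalIntegral

theorem mul_exp_neg_le_of_eq_add_integral {f g : ℝ → ℝ} {A B c : ℝ} (hAB : A ≤ B)
    (hg : IntervalIntegrable g volume A B)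
    (hf : ∀ t ∈ Icc A B, f t = f A + ∫ s in A..t, g s)
    (hgf : ∀ᵐ s, s ∈ Ioo A B → -(c * f s) ≤ g s) :
    f A * Real.exp (-(c * (B - A))) ≤ f B := by
  -- `e^{ct} f t` is absolutely continuous with a.e. derivative `e^{ct} (g t + c f t) ≥ 0`.
  set F : ℝ → ℝ := fun t => f A + ∫ s in A..t, g s
  set E : ℝ → ℝ := fun t => Real.exp (c * t)
  have hF : AbsolutelyContinuousOnInterval F A B :=
    contDiffOn_const.absolutelyContinuousOnInterval.add
      (hg.absolutelyContinuousOnInterval_intervalIntegral left_mem_uIcc)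
  have hE : AbsolutelyContinuousOnInterval E A B :=
    (by fun_prop : ContDiff ℝ 1 E).contDiffOn.absolutelyContinuousOnInterval
  have hderiv : ∀ᵐ t, t ∈ Ioo A B → 0 ≤ deriv (E * F) t := by
    filter_upwards [hg.ae_hasDerivAt_integral, hgf] with t hdt hgt ht
    have hFt : HasDerivAt F (g t) t :=
      (hdt (Ioo_subset_Icc_self.trans Icc_subset_uIcc ht) A left_mem_uIcc).const_add _
    have hEt : HasDerivAt E (c * E t) t := by
      simpa [E, mul_comm] using ((hasDerivAt_id t).const_mul c).exp
    rw [(hEt.mul hFt).deriv, show F t = f t from (hf t (Ioo_subset_Icc_self ht)).symm]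
    nlinarith [hgt ht, Real.exp_pos (c * t)]
  have hmono : 0 ≤ ∫ t in A..B, deriv (E * F) t :=
    integral_nonneg_of_ae_restrict hAB <|
      (ae_restrict_congr_set Ioo_ae_eq_Icc).mp ((ae_restrict_iff' measurableSet_Ioo).mpr hderiv)
  rw [(hE.mul hF).integral_deriv_eq_sub] at hmono
  have hFA : F A = f A := by simp [F]
  have hFB : F B = f B := (hf B ⟨hAB, le_rfl⟩).symm
  simp only [Pi.mul_apply, hFA, hFB, E] at hmono
  have hexp : f A * Real.exp (-(c * (B - A))) * Real.exp (c * B) = Real.exp (c * A) * f A := by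
    rw [mul_assoc, ← Real.exp_add]; ring_nf
  exact le_of_mul_le_mul_right (by linarith) (Real.exp_pos (c * B))

theorem forall_lt_of_forall_lt_on_Ico {ι : Type*} [Finite ι] {f : ℝ → ι → ℝ} {a b r : ℝ}
    (hf : ∀ j, ContinuousOn (fun t => f t j) (Icc a b))
    (hstep : ∀ τ ∈ Icc a b, (∀ u ∈ Ico a τ, ∀ j, r < f u j) → ∀ j, r < f τ j) :
    ∀ t ∈ Icc a b, ∀ j, r < f t j := by
  by_contra! hbad
  obtain ⟨t, ht, j, hj⟩ := hbad
  set S := ⋃ j, Icc a b ∩ (fun t => f t j) ⁻¹' Iic r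
  have hS : IsCompact S := isCompact_iUnion fun j => isCompact_Icc.of_isClosed_subset
    ((hf j).preimage_isClosed_of_isClosed isClosed_Icc isClosed_Iic) inter_subset_left
  obtain ⟨τ, hτS, hτmin⟩ := hS.exists_isLeast ⟨t, mem_iUnion.2 ⟨j, ht, hj⟩⟩
  obtain ⟨k, hτab, hk⟩ := mem_iUnion.1 hτS
  refine (hstep τ hτab (fun u hu j => ?_) k).not_ge hk
  by_contra! hle
  exact hu.2.not_ge (hτmin (mem_iUnion.2 ⟨j, ⟨hu.1, hu.2.le.trans hτab.2⟩, hle⟩))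

theorem neg_mul_sub_le_sum_mul_sub {ι : Type*} [Fintype ι] {w y : ι → ℝ} {z ρ c : ℝ}
    (hw : ∀ j, 0 ≤ w j) (hsum : ∑ j, w j ≤ c) (hz : ρ ≤ z) (hy : ∀ j, ρ ≤ y j) :
    -(c * (z - ρ)) ≤ ∑ j, w j * (y j - z) :=
  calc -(c * (z - ρ)) ≤ -((∑ j, w j) * (z - ρ)) :=
        neg_le_neg (mul_le_mul_of_nonneg_right hsum (sub_nonneg.2 hz))
    _ = ∑ j, w j * (ρ - z) := by
        rw [Finset.sum_mul, ← Finset.sum_neg_distrib]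
        exact Finset.sum_congr rfl fun j _ => by ring
    _ ≤ ∑ j, w j * (y j - z) :=
        Finset.sum_le_sum fun j _ => mul_le_mul_of_nonneg_left (by linarith [hy j]) (hw j)

section Consensus

variable {n : ℕ} {abar hbar ξ : ℝ} {a h : Fin n → Fin n → ℝ → ℝ} {x D : ℝ → Fin n → ℝ}

theorem GoodWeights.sum_le (ha : GoodWeights n abar a) (i : Fin n) {t : ℝ} (ht : 0 ≤ t) :
    ∑ j, a i j t ≤ ((n : ℝ) - 1) * abar := by
  rw [← Finset.add_sum_erase _ _ (Finset.mem_univ i), ha.2.2 i t ht, zero_add]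
  calc ∑ j ∈ Finset.univ.erase i, a i j t ≤ ∑ _j ∈ Finset.univ.erase i, abar :=
        Finset.sum_le_sum fun j _ => (ha.2.1 i j t ht).2
    _ = ((n : ℝ) - 1) * abar := by
        simp [Finset.card_erase_of_mem, Nat.cast_sub (Nat.one_le_of_lt i.pos)]

theorem IsSolEq.intervalIntegrable (hx : IsSolEq n a h hbar ξ x D) (i : Fin n) {A B : ℝ}
    (hA : ξ ≤ A) (hAB : A ≤ B) : IntervalIntegrable (fun s => D s i) volume A B :=
  (intervalIntegrable_iff_integrableOn_Icc_of_le hAB).mpr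
    ((hx.2.1 i B).mono_set (Icc_subset_Icc_left hA))

theorem IsSolEq.eq_add_integral (hx : IsSolEq n a h hbar ξ x D) (i : Fin n) {A t : ℝ}
    (hA : ξ ≤ A) (hAt : A ≤ t) : x t i = x A i + ∫ s in A..t, D s i := by
  rw [hx.2.2.1 i t (hA.trans hAt), hx.2.2.1 i A hA, add_assoc,
    integral_add_adjacent_intervals (hx.intervalIntegrable i le_rfl hA)
      (hx.intervalIntegrable i hA hAt)]

theorem IsSolEq.continuousOn (hx : IsSolEq n a h hbar ξ x D) (i : Fin n) (T : ℝ) :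
    ContinuousOn (fun t => x t i) (Icc ξ T) := by
  refine ((continuousOn_const (c := x ξ i)).add
    (continuousOn_primitive_Icc (hx.2.1 i T))).congr fun t ht => ?_
  simp only [Pi.add_apply]
  rw [hx.2.2.1 i t ht.1, integral_of_le ht.1, integral_Icc_eq_integral_Ioc]

theorem IsSolEq.sub_mul_exp_le (hx : IsSolEq n a h hbar ξ x D) (ha : GoodWeights n abar a)
    (hξ : 0 ≤ ξ) (i : Fin n) {A B ρ : ℝ} (hA : ξ ≤ A) (hAB : A ≤ B)
    (hxi : ∀ s ∈ Ico A B, ρ ≤ x s i) (hdel : ∀ s ∈ Ico A B, ∀ j, ρ ≤ x (s - h i j s) j) :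
    (x A i - ρ) * Real.exp (-(((n : ℝ) - 1) * abar * (B - A))) ≤ x B i - ρ := by
  refine mul_exp_neg_le_of_eq_add_integral (f := fun s => x s i - ρ) hAB
    (hx.intervalIntegrable i hA hAB) (fun t ht => ?_) ?_
  · rw [hx.eq_add_integral i hA ht.1]; ring
  · filter_upwards [hx.2.2.2] with s hs hsAB
    have hs0 : 0 ≤ s := hξ.trans (hA.trans hsAB.1.le)
    rw [hs (hA.trans hsAB.1.le) i]
    exact neg_mul_sub_le_sum_mul_sub (fun j => (ha.2.1 i j s hs0).1) (ha.sum_le i hs0)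
      (hxi s (Ioo_subset_Ico_self hsAB)) (hdel s (Ioo_subset_Ico_self hsAB))

theorem IsSolEq.lt_of_forall_Ico_lt (hx : IsSolEq n a h hbar ξ x D) (ha : GoodWeights n abar a)
    (hh : GoodDelays n hbar h) (hξ : 0 ≤ ξ) (hhbar : 0 ≤ hbar) (hc : 0 ≤ ((n : ℝ) - 1) * abar)
    (hinit : ∀ i, x ξ i = 1) (hpast : ∀ s ∈ Ico (ξ - hbar) ξ, ∀ i, x s i = 0)
    {r τ : ℝ} (hr : 0 < r) (hrψ : r < Real.exp (-(((n : ℝ) - 1) * abar * hbar)))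
    (hτ : ξ ≤ τ) (hlt : ∀ u ∈ Ico ξ τ, ∀ j, r < x u j) (i : Fin n) : r < x τ i := by
  set c := ((n : ℝ) - 1) * abar
  have hdelay : ∀ s ∈ Ico ξ τ, ∀ j, s - hbar ≤ s - h i j s ∧ s - h i j s ≤ s := by
    intro s hs j
    obtain ⟨h0, h1⟩ := hh.2.1 i j s (hξ.trans hs.1)
    constructor <;> linarith
  have hdel_late : ∀ s ∈ Ico ξ τ, ∀ j, ξ ≤ s - h i j s → r < x (s - h i j s) j :=
    fun s hs j hle => hlt _ ⟨hle, (hdelay s hs j).2.trans_lt hs.2⟩ j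
  have hdel_nonneg : ∀ s ∈ Ico ξ τ, ∀ j, 0 ≤ x (s - h i j s) j := by
    intro s hs j
    rcases lt_or_ge (s - h i j s) ξ with hbefore | hle
    · exact (hpast _ ⟨by linarith [(hdelay s hs j).1, hs.1], hbefore⟩ j).ge
    · exact (hr.trans (hdel_late s hs j hle)).le
  have hearly : ∀ B, ξ ≤ B → B ≤ τ → Real.exp (-(c * (B - ξ))) ≤ x B i := by
    intro B hξB hBτ
    simpa [hinit i] using hx.sub_mul_exp_le ha hξ i (ρ := 0) le_rfl hξB
      (fun s hs => (hr.trans (hlt s ⟨hs.1, hs.2.trans_le hBτ⟩ i)).le)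
      (fun s hs => hdel_nonneg s ⟨hs.1, hs.2.trans_le hBτ⟩)
  rcases le_or_gt τ (ξ + hbar) with hτh | hτh
  · calc r < Real.exp (-(c * hbar)) := hrψ
      _ ≤ Real.exp (-(c * (τ - ξ))) := by gcongr; linarith
      _ ≤ x τ i := hearly τ hτ le_rfl
  · have hstart : Real.exp (-(c * hbar)) ≤ x (ξ + hbar) i := by
      simpa using hearly (ξ + hbar) (by linarith) hτh.le
    have hlate := hx.sub_mul_exp_le ha hξ i (ρ := r) (by linarith) hτh.le
      (fun s hs => (hlt s ⟨by linarith [hs.1], hs.2⟩ i).le)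
      (fun s hs j => (hdel_late s ⟨by linarith [hs.1], hs.2⟩ j
        (by linarith [hs.1, (hdelay s ⟨by linarith [hs.1], hs.2⟩ j).1])).le)
    have hpos : 0 < (x (ξ + hbar) i - r) * Real.exp (-(c * (τ - (ξ + hbar)))) :=
      mul_pos (by linarith) (Real.exp_pos _)
    linarith

end Consensus

theorem stmt3 (n : ℕ) (hn : 1 ≤ n) (abar hbar : ℝ) (habar : 0 ≤ abar) (hhbar : 0 ≤ hbar)
    (a h : Fin n → Fin n → ℝ → ℝ)
    (ha : GoodWeights n abar a) (hh : GoodDelays n hbar h)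
    (ξ : ℝ) (hξ : 0 ≤ ξ)
    (x D : ℝ → Fin n → ℝ) (hx : IsSolEq n a h hbar ξ x D)
    (hinit : ∀ i, x ξ i = 1)
    (hpast : ∀ s ∈ Ico (ξ - hbar) ξ, ∀ i, x s i = 0) :
    ∀ i : Fin n, ∀ t : ℝ, ξ ≤ t →
      Real.exp (-(((n : ℝ) - 1) * abar * hbar)) ≤ x t i := by
  intro i t ht
  have hc : 0 ≤ ((n : ℝ) - 1) * abar := mul_nonneg (sub_nonneg.2 (by exact_mod_cast hn)) habar
  by_contra! hxt
  obtain ⟨r, hr, hrψ⟩ := exists_between (max_lt hxt (Real.exp_pos _))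
  have hxr := forall_lt_of_forall_lt_on_Ico (fun j => hx.continuousOn j t)
    (fun τ hτ hlt => hx.lt_of_forall_Ico_lt ha hh hξ hhbar hc hinit hpast
      ((le_max_right _ _).trans_lt hr) hrψ hτ.1 hlt) t ⟨ht, le_rfl⟩ i
  exact ((le_max_left _ _).trans_lt hr).not_gt hxr
end

section
/- Suppose either (i) A(·) is non-instantaneously type-symmetric and the persistent graph G_∞ is connected, or (ii) A(·) is repeatedly strongly connected, and in both cases M := sup over i,j and p of ∫_{t_p}^{t_{p+1}} a_{ij}(t) dt is finite. Let x be a solution of the delayed consensus inequality on [t₀,∞) whose common limit c* = lim_{t→∞} x_i(t) is finite (the solution remains bounded). Then the nonnegative residual Δ_i(t) := Σ_{j=1}^n a_{ij}(t)(x_j(t−h_{ij}(t)) − x_i(t)) − ẋ_i(t) satisfies ∫_t^{t+T} Δ_i(ξ) dξ → 0 as t → ∞, for every horizon T > 0 and every i ∈ [1:n]. -/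
open MeasureTheory Set Filter intervalIntegral

/-! Over `[t, t + T]` the integral of `ẋ_i` is the increment `x_i(t + T) - x_i(t)`, which tends to
`c - c = 0`. The consensus term `∑_j a_ij(ξ) (x_j(ξ - h_ij(ξ)) - x_i(ξ))` tends to `0` pointwise,
because the weights are bounded and `ξ - h_ij(ξ) → ∞`; hence so does its integral over a window of
fixed length `T`. -/

open Topology

/-- No integrability of `f` is needed: if `f - g` is not integrable, the left side is the junk
value `0`. -/
theorem norm_intervalIntegral_sub_le {E : Type*} [NormedAddCommGroup E] [NormedSpace ℝ E]
    {f g : ℝ → E} {a b : ℝ} {μ : Measure ℝ} (hg : IntervalIntegrable g μ a b) :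
    ‖∫ s in a..b, (f s - g s) ∂μ‖ ≤ ‖∫ s in a..b, f s ∂μ‖ + ‖∫ s in a..b, g s ∂μ‖ := by
  by_cases hfg : IntervalIntegrable (fun s => f s - g s) μ a b
  · have hf : IntervalIntegrable f μ a b := by simpa using hfg.add hg
    rw [intervalIntegral.integral_sub hf hg]
    exact norm_sub_le _ _
  · rw [intervalIntegral.integral_undef hfg, norm_zero]
    positivity

theorem tendsto_intervalIntegral_add_const_of_tendsto_zero {E : Type*} [NormedAddCommGroup E]
    [NormedSpace ℝ E] {f : ℝ → E} (hf : Tendsto f atTop (𝓝 0)) (T : ℝ) :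
    Tendsto (fun t => ∫ s in t..t + T, f s) atTop (𝓝 0) := by
  rw [NormedAddGroup.tendsto_nhds_zero] at hf ⊢
  intro ε hε
  obtain ⟨N, hN⟩ := eventually_atTop.1 (hf (ε / (|T| + 1)) (by positivity))
  filter_upwards [eventually_ge_atTop (N + |T|)] with t ht
  have hmin : t - |T| ≤ min t (t + T) :=
    le_min (by linarith [abs_nonneg T]) (by linarith [neg_abs_le T])
  calc ‖∫ s in t..t + T, f s‖ ≤ ε / (|T| + 1) * |t + T - t| :=
        norm_integral_le_of_norm_le_const fun s hs => (hN s (by linarith [hs.1])).le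
    _ = ε * |T| / (|T| + 1) := by rw [add_sub_cancel_left, div_mul_eq_mul_div]
    _ < ε := by
        rw [div_lt_iff₀ (by positivity)]
        nlinarith

theorem intervalIntegrable_of_forall_integrableOn_Icc_s7 {E : Type*} [NormedAddCommGroup E]
    {g : ℝ → E} {μ : Measure ℝ} {t0 t u : ℝ} (hg : ∀ T, IntegrableOn g (Icc t0 T) μ)
    (ht : t0 ≤ t) (hu : t0 ≤ u) : IntervalIntegrable g μ t u :=
  ((hg (max t u)).mono_set (uIcc_subset_Icc ⟨ht, le_max_left t u⟩ ⟨hu, le_max_right t u⟩)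
    ).intervalIntegrable

theorem tendsto_intervalIntegral_add_const_of_primitive {E : Type*} [NormedAddCommGroup E]
    [NormedSpace ℝ E] {y g : ℝ → E} {t0 : ℝ} {c : E}
    (hg : ∀ T, IntegrableOn g (Icc t0 T)) (hy : ∀ t, t0 ≤ t → y t = y t0 + ∫ s in t0..t, g s)
    (hc : Tendsto y atTop (𝓝 c)) (T : ℝ) :
    Tendsto (fun t => ∫ s in t..t + T, g s) atTop (𝓝 0) := by
  have hincr : Tendsto (fun t => y (t + T) - y t) atTop (𝓝 0) := by
    simpa using (hc.comp (tendsto_atTop_add_const_right atTop T tendsto_id)).sub hc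
  refine hincr.congr' ?_
  filter_upwards [eventually_ge_atTop t0, eventually_ge_atTop (t0 - T)] with t ht htT
  have hu : t0 ≤ t + T := by linarith
  rw [hy t ht, hy (t + T) hu, ← intervalIntegral.integral_interval_sub_left
    (intervalIntegrable_of_forall_integrableOn_Icc_s7 hg le_rfl hu)
    (intervalIntegrable_of_forall_integrableOn_Icc_s7 hg le_rfl ht)]
  abel

theorem tendsto_sum_mul_sub_delayed {ι : Type*} [Fintype ι] {w τ y : ι → ℝ → ℝ} {z : ℝ → ℝ}
    {c : ℝ} (hw : ∀ j, IsBoundedUnder (· ≤ ·) atTop (norm ∘ w j))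
    (hτ : ∀ j, Tendsto (fun t => t - τ j t) atTop atTop)
    (hy : ∀ j, Tendsto (y j) atTop (𝓝 c)) (hz : Tendsto z atTop (𝓝 c)) :
    Tendsto (fun t => ∑ j, w j t * (y j (t - τ j t) - z t)) atTop (𝓝 0) := by
  simpa using tendsto_finsetSum Finset.univ fun j _ =>
    isBoundedUnder_le_mul_tendsto_zero (hw j) (by simpa using ((hy j).comp (hτ j)).sub hz)

theorem GoodWeights.isBoundedUnder {n : ℕ} {abar : ℝ} {a : Fin n → Fin n → ℝ → ℝ}
    (ha : GoodWeights n abar a) (i j : Fin n) :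
    IsBoundedUnder (· ≤ ·) atTop (norm ∘ a i j) := by
  refine isBoundedUnder_of_eventually_le (a := abar) ?_
  filter_upwards [eventually_ge_atTop 0] with t ht
  obtain ⟨hnonneg, hle⟩ := ha.2.1 i j t ht
  simpa [abs_of_nonneg hnonneg] using hle

theorem GoodDelays.tendsto_sub_atTop {n : ℕ} {hbar : ℝ} {h : Fin n → Fin n → ℝ → ℝ}
    (hh : GoodDelays n hbar h) (i j : Fin n) :
    Tendsto (fun t => t - h i j t) atTop atTop := by
  refine tendsto_atTop_mono' atTop ?_ (tendsto_atTop_add_const_right atTop (-hbar) tendsto_id)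
  filter_upwards [eventually_ge_atTop 0] with t ht
  simp only [id]
  linarith [(hh.2.1 i j t ht).2]

theorem stmt7_general (n : ℕ) (abar hbar : ℝ)
    (a h : Fin n → Fin n → ℝ → ℝ)
    (ha : GoodWeights n abar a) (hh : GoodDelays n hbar h)
    (t0 : ℝ) (x D : ℝ → Fin n → ℝ)
    (hx : IsSolIneq n a h hbar t0 x D)
    (c : ℝ) (hc : ∀ i : Fin n, Tendsto (fun t => x t i) atTop (nhds c)) :
    ∀ T : ℝ, 0 < T → ∀ i : Fin n,
      Tendsto (fun t => ∫ ξ in t..t + T,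
          ((∑ j : Fin n, a i j ξ * (x (ξ - h i j ξ) j - x ξ i)) - D ξ i))
        atTop (nhds 0) := by
  intro T hT i
  obtain ⟨-, hDint, hrep, -⟩ := hx
  have hcons : Tendsto (fun ξ => ∑ j, a i j ξ * (x (ξ - h i j ξ) j - x ξ i)) atTop (𝓝 0) :=
    tendsto_sum_mul_sub_delayed (w := a i) (τ := h i) (y := fun j t => x t j)
      (ha.isBoundedUnder i) (hh.tendsto_sub_atTop i) hc (hc i)
  have hderiv := tendsto_intervalIntegral_add_const_of_primitive (hDint i) (hrep i) (hc i) T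
  have hsum := (tendsto_intervalIntegral_add_const_of_tendsto_zero hcons T).norm.add hderiv.norm
  rw [norm_zero, add_zero] at hsum
  refine squeeze_zero_norm' ?_ hsum
  filter_upwards [eventually_ge_atTop t0] with t ht
  exact norm_intervalIntegral_sub_le
    (intervalIntegrable_of_forall_integrableOn_Icc_s7 (hDint i) ht (by linarith))

theorem stmt7 (n : ℕ) (hn : 1 ≤ n) (abar hbar : ℝ) (habar : 0 ≤ abar) (hhbar : 0 ≤ hbar)
    (a h : Fin n → Fin n → ℝ → ℝ)
    (ha : GoodWeights n abar a) (hh : GoodDelays n hbar h)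
    (hcon : (∃ tp K M, NonInstTypeSymm n a tp K ∧ PersGraphConnected n a ∧ MBound n a tp M)
          ∨ (∃ tp ε M, RepeatedlyStronglyConnected n a tp ε ∧ MBound n a tp M))
    (t0 : ℝ) (ht0 : 0 ≤ t0) (x D : ℝ → Fin n → ℝ)
    (hx : IsSolIneq n a h hbar t0 x D)
    (c : ℝ) (hc : ∀ i : Fin n, Tendsto (fun t => x t i) atTop (nhds c)) :
    ∀ T : ℝ, 0 < T → ∀ i : Fin n,
      Tendsto (fun t => ∫ ξ in t..t + T,
          ((∑ j : Fin n, a i j ξ * (x (ξ - h i j ξ) j - x ξ i)) - D ξ i))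
        atTop (nhds 0) :=
  stmt7_general n abar hbar a h ha hh t0 x D hx c hc
end
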